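/- Let G be a group, H a normal subgroup of G, and π : Ĥ → H a surjective group homomorphism whose kernel A := ker π is contained in the center of Ĥ. Suppose for each g ∈ G we are given a group automorphism ρ̃_g of Ĥ such that π(ρ̃_g(x)) = g · π(x) · g⁻¹ for all x ∈ Ĥ, ρ̃_g(a) = a for all a ∈ A, ρ̃_1 = id, and ρ̃_{gh} = ρ̃_g ∘ c_h for all g ∈ G, h ∈ H (where c_h is conjugation by any element of π⁻¹(h)). Then: (a) for all g,g' ∈ G and x ∈ Ĥ the element ρ̃_g(ρ̃_{g'}(x)) · ρ̃_{gg'}(x)⁻¹ lies in A and depends only on π(x), and the resulting map b̄(g,g') : H → A, b̄(g,g')(π(x)) := ρ̃_g(ρ̃_{g'}(x)) · ρ̃_{gg'}(x)⁻¹, is a group homomorphism; (b) b̄(hg, g') = b̄(g, g'h) = b̄(g,g') for all g,g' ∈ G and h ∈ H; (c) for all g,g',g'' ∈ G and h ∈ H: b̄(g',g'')(h) · b̄(gg',g'')(h)⁻¹ · b̄(g,g'g'')(h) · (b̄(g,g')(g'' h g''⁻¹))⁻¹ = 1. -/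

import Mathlib

/-!
`ρ̃_g ∘ ρ̃_{g'}` and `ρ̃_{gg'}` lift the same automorphism of `H`, so they differ by a factor in the
central subgroup `A`. Centrality makes this factor multiplicative in `x` and blind to
conjugation in `Ĥ` (which handles translating either argument by `H`), and since each `ρ̃_g`
fixes `A`, expanding `ρ̃_g ρ̃_{g'} ρ̃_{g''}` in two ways gives the cocycle identity.
-/

theorem MulAut.conj_eq_one_of_mem_center {M : Type*} [Group M] {k : M}
    (hk : k ∈ Subgroup.center M) : MulAut.conj k = 1 := by
  ext z
  rw [MulAut.conj_apply, ← Subgroup.mem_center_iff.mp hk z, mul_inv_cancel_right, MulAut.one_apply]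

theorem MulAut.mul_conj {M : Type*} [Group M] (φ : MulAut M) (w : M) :
    φ * MulAut.conj w = MulAut.conj (φ w) * φ := by
  ext z
  simp

section LiftObstruction

variable {G Hhat : Type*} [Group G] [Group Hhat] {H : Subgroup G} {π : Hhat →* H}

theorem MulAut.conj_eq_of_map_eq (hcentral : π.ker ≤ Subgroup.center Hhat) {a b : Hhat}
    (h : π a = π b) : MulAut.conj a = MulAut.conj b := by
  have hk : a⁻¹ * b ∈ Subgroup.center Hhat :=
    hcentral (by rw [MonoidHom.mem_ker, map_mul, map_inv, h, inv_mul_cancel])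
  rw [← mul_inv_cancel_left a b, map_mul, MulAut.conj_eq_one_of_mem_center hk, mul_one]

def liftObstruction (ρ : G → MulAut Hhat) (g g' : G) (x : Hhat) : Hhat :=
  ρ g (ρ g' x) * (ρ (g * g') x)⁻¹

variable {ρ : G → MulAut Hhat}

theorem liftObstruction_mem_ker (hlift : ∀ (g : G) (x : Hhat), (π (ρ g x) : G) = g * π x * g⁻¹)
    (g g' : G) (x : Hhat) : liftObstruction ρ g g' x ∈ π.ker := by
  have h : π (ρ g (ρ g' x)) = π (ρ (g * g') x) := Subtype.ext (by rw [hlift, hlift, hlift]; group)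
  rw [MonoidHom.mem_ker, liftObstruction, map_mul, map_inv, h, mul_inv_cancel]

theorem liftObstruction_commute
    (hlift : ∀ (g : G) (x : Hhat), (π (ρ g x) : G) = g * π x * g⁻¹)
    (hcentral : π.ker ≤ Subgroup.center Hhat) (g g' : G) (x z : Hhat) :
    Commute (liftObstruction ρ g g' x) z :=
  (Subgroup.mem_center_iff.mp (hcentral (liftObstruction_mem_ker hlift g g' x)) z).symm

theorem liftObstruction_eq_of_map_eq (hfix : ∀ (g : G) (a : Hhat), a ∈ π.ker → ρ g a = a)
    (g g' : G) {x x' : Hhat} (h : π x = π x') :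
    liftObstruction ρ g g' x = liftObstruction ρ g g' x' := by
  have hk : x⁻¹ * x' ∈ π.ker := by rw [MonoidHom.mem_ker, map_mul, map_inv, h, inv_mul_cancel]
  have hρ (u : G) : ρ u x' = ρ u x * (x⁻¹ * x') := by
    rw [← hfix u _ hk, ← map_mul, mul_inv_cancel_left]
  rw [liftObstruction, liftObstruction, hρ, hρ, map_mul, hfix g _ hk]
  group

theorem liftObstruction_mul (hlift : ∀ (g : G) (x : Hhat), (π (ρ g x) : G) = g * π x * g⁻¹)
    (hcentral : π.ker ≤ Subgroup.center Hhat) (g g' : G) (x x' : Hhat) :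
    liftObstruction ρ g g' (x * x') = liftObstruction ρ g g' x * liftObstruction ρ g g' x' :=
  calc liftObstruction ρ g g' (x * x')
      = ρ g (ρ g' x) * liftObstruction ρ g g' x' * (ρ (g * g') x)⁻¹ := by
        simp only [liftObstruction, map_mul]; group
    _ = liftObstruction ρ g g' x * liftObstruction ρ g g' x' := by
        rw [mul_assoc, liftObstruction_commute hlift hcentral, ← mul_assoc]
        rfl

theorem liftObstruction_conj (hlift : ∀ (g : G) (x : Hhat), (π (ρ g x) : G) = g * π x * g⁻¹)
    (hcentral : π.ker ≤ Subgroup.center Hhat) (g g' : G) (y x : Hhat) :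
    liftObstruction ρ g g' (y * x * y⁻¹) = liftObstruction ρ g g' x := by
  let φ : Hhat →* Hhat := MonoidHom.mk' _ (liftObstruction_mul hlift hcentral g g')
  have hφ : Commute (φ x) (φ y) := liftObstruction_commute hlift hcentral g g' x (φ y)
  change φ (y * x * y⁻¹) = φ x
  rw [map_mul, map_mul, map_inv, ← hφ.eq, mul_inv_cancel_right]

/-- Since `π y * g = g * π (ρ g⁻¹ y)` and `ρ g (ρ g⁻¹ y)` agrees with `y` modulo the centre. -/
theorem map_mul_left_eq_conj_mul
    (hlift : ∀ (g : G) (x : Hhat), (π (ρ g x) : G) = g * π x * g⁻¹)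
    (hcentral : π.ker ≤ Subgroup.center Hhat)
    (hcomp : ∀ (g : G) (y : Hhat), ρ (g * (π y : G)) = ρ g * MulAut.conj y) (g : G) (y : Hhat) :
    ρ ((π y : G) * g) = MulAut.conj y * ρ g := by
  have hy : (π y : G) * g = g * π (ρ g⁻¹ y) := by rw [hlift]; group
  have hπ : π (ρ g (ρ g⁻¹ y)) = π y := Subtype.ext (by rw [hlift, hlift]; group)
  rw [hy, hcomp, MulAut.mul_conj, MulAut.conj_eq_of_map_eq hcentral hπ]

theorem liftObstruction_mul_left
    (hlift : ∀ (g : G) (x : Hhat), (π (ρ g x) : G) = g * π x * g⁻¹)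
    (hcentral : π.ker ≤ Subgroup.center Hhat)
    (hcomp : ∀ (g : G) (y : Hhat), ρ (g * (π y : G)) = ρ g * MulAut.conj y)
    (g g' : G) (y x : Hhat) :
    liftObstruction ρ ((π y : G) * g) g' x = liftObstruction ρ g g' x :=
  calc liftObstruction ρ ((π y : G) * g) g' x = MulAut.conj y (liftObstruction ρ g g' x) := by
        rw [liftObstruction, liftObstruction, mul_assoc (π y : G),
          map_mul_left_eq_conj_mul hlift hcentral hcomp,
          map_mul_left_eq_conj_mul hlift hcentral hcomp]
        simp only [MulAut.mul_apply, map_mul, map_inv]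
    _ = liftObstruction ρ g g' x := by
        rw [MulAut.conj_apply, ← (liftObstruction_commute hlift hcentral g g' x y).eq,
          mul_inv_cancel_right]

theorem liftObstruction_mul_right
    (hlift : ∀ (g : G) (x : Hhat), (π (ρ g x) : G) = g * π x * g⁻¹)
    (hcentral : π.ker ≤ Subgroup.center Hhat)
    (hcomp : ∀ (g : G) (y : Hhat), ρ (g * (π y : G)) = ρ g * MulAut.conj y)
    (g g' : G) (y x : Hhat) :
    liftObstruction ρ g (g' * (π y : G)) x = liftObstruction ρ g g' x := by
  rw [← liftObstruction_conj hlift hcentral g g' y x, liftObstruction, liftObstruction,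
    ← mul_assoc, hcomp, hcomp]
  rfl

theorem liftObstruction_cocycle
    (hlift : ∀ (g : G) (x : Hhat), (π (ρ g x) : G) = g * π x * g⁻¹)
    (hfix : ∀ (g : G) (a : Hhat), a ∈ π.ker → ρ g a = a) (g g' g'' : G) (x : Hhat) :
    liftObstruction ρ g' g'' x * liftObstruction ρ g (g' * g'') x =
      liftObstruction ρ g g' (ρ g'' x) * liftObstruction ρ (g * g') g'' x := by
  rw [← hfix g _ (liftObstruction_mem_ker hlift g' g'' x)]
  simp only [liftObstruction, map_mul, map_inv, ← mul_assoc g g' g'']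
  group

theorem liftObstruction_twisted_cocycle
    (hlift : ∀ (g : G) (x : Hhat), (π (ρ g x) : G) = g * π x * g⁻¹)
    (hcentral : π.ker ≤ Subgroup.center Hhat)
    (hfix : ∀ (g : G) (a : Hhat), a ∈ π.ker → ρ g a = a) (g g' g'' : G) (x : Hhat) :
    liftObstruction ρ g' g'' x * (liftObstruction ρ (g * g') g'' x)⁻¹ *
        liftObstruction ρ g (g' * g'') x * (liftObstruction ρ g g' (ρ g'' x))⁻¹ = 1 := by
  have hc := (liftObstruction_commute hlift hcentral (g * g') g'' x
    (liftObstruction ρ g (g' * g'') x)).inv_left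
  calc liftObstruction ρ g' g'' x * (liftObstruction ρ (g * g') g'' x)⁻¹ *
        liftObstruction ρ g (g' * g'') x * (liftObstruction ρ g g' (ρ g'' x))⁻¹
      = liftObstruction ρ g' g'' x * liftObstruction ρ g (g' * g'') x *
        (liftObstruction ρ (g * g') g'' x)⁻¹ * (liftObstruction ρ g g' (ρ g'' x))⁻¹ := by
        rw [mul_assoc (liftObstruction ρ g' g'' x), hc.eq, ← mul_assoc]
    _ = 1 := by rw [liftObstruction_cocycle hlift hfix]; group

end LiftObstruction

theorem gerbal_pair_lifting_obstruction_two_cocycle_general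
    {G : Type*} [Group G] (H : Subgroup G)
    {Hhat : Type*} [Group Hhat]
    (π : Hhat →* ↥H)
    (hcentral : π.ker ≤ Subgroup.center Hhat)
    (ρ : G → MulAut Hhat)
    (hlift : ∀ (g : G) (x : Hhat), (↑(π (ρ g x)) : G) = g * ↑(π x) * g⁻¹)
    (hfix : ∀ (g : G) (a : Hhat), a ∈ π.ker → ρ g a = a)
    (hcomp : ∀ (g : G) (y : Hhat), ρ (g * (↑(π y) : G)) = ρ g * MulAut.conj y)
    (b : G → G → Hhat → Hhat)
    (hb : ∀ (g g' : G) (x : Hhat),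
      b g g' x = ρ g (ρ g' x) * (ρ (g * g') x)⁻¹) :
    -- (a) values in A, well-defined on H, and a homomorphism in the H-variable
    (∀ (g g' : G) (x : Hhat), b g g' x ∈ π.ker) ∧
    (∀ (g g' : G) (x x' : Hhat), π x = π x' → b g g' x = b g g' x') ∧
    (∀ (g g' : G) (x x' : Hhat), b g g' (x * x') = b g g' x * b g g' x') ∧
    -- (b) invariance under translating the arguments by elements of H
    (∀ (g g' : G) (y : Hhat) (x : Hhat),
      b ((↑(π y) : G) * g) g' x = b g g' x ∧ b g (g' * (↑(π y) : G)) x = b g g' x) ∧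
    -- (c) the twisted 2-cocycle identity
    (∀ (g g' g'' : G) (x z : Hhat),
      (↑(π z) : G) = g'' * (↑(π x) : G) * g''⁻¹ →
        b g' g'' x * (b (g * g') g'' x)⁻¹ * b g (g' * g'') x * (b g g' z)⁻¹ = 1) := by
  obtain rfl : b = liftObstruction ρ := funext fun g => funext fun g' => funext (hb g g')
  refine ⟨liftObstruction_mem_ker hlift, fun g g' _ _ => liftObstruction_eq_of_map_eq hfix g g',
    liftObstruction_mul hlift hcentral, fun g g' y x =>
      ⟨liftObstruction_mul_left hlift hcentral hcomp g g' y x,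
        liftObstruction_mul_right hlift hcentral hcomp g g' y x⟩,
    fun g g' g'' x z hz => ?_⟩
  rw [liftObstruction_eq_of_map_eq hfix g g' (Subtype.ext (hz.trans (hlift g'' x).symm))]
  exact liftObstruction_twisted_cocycle hlift hcentral hfix g g' g'' x

/-- Given per-element liftings `ρ̃_g` of the conjugation action of `G` on a normal subgroup
`H` to a central extension `π : Ĥ → H`, satisfying `ρ̃_1 = id` and `ρ̃_{gh} = ρ̃_g ∘ c_h`
for `h ∈ H`, the failure of `g ↦ ρ̃_g` to be a homomorphism is measured by homomorphisms
`b̄(g,g') : H → A` which form a 2-cochain on `K = G/H` satisfying the twisted 2-cocycle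
identity. -/
theorem gerbal_pair_lifting_obstruction_two_cocycle
    {G : Type*} [Group G] (H : Subgroup G) [H.Normal]
    {Hhat : Type*} [Group Hhat]
    (π : Hhat →* ↥H) (hπsurj : Function.Surjective π)
    (hcentral : π.ker ≤ Subgroup.center Hhat)
    (ρ : G → MulAut Hhat)
    (hlift : ∀ (g : G) (x : Hhat), (↑(π (ρ g x)) : G) = g * ↑(π x) * g⁻¹)
    (hfix : ∀ (g : G) (a : Hhat), a ∈ π.ker → ρ g a = a)
    (hone : ρ 1 = 1)
    (hcomp : ∀ (g : G) (y : Hhat), ρ (g * (↑(π y) : G)) = ρ g * MulAut.conj y)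
    (b : G → G → Hhat → Hhat)
    (hb : ∀ (g g' : G) (x : Hhat),
      b g g' x = ρ g (ρ g' x) * (ρ (g * g') x)⁻¹) :
    -- (a) values in A, well-defined on H, and a homomorphism in the H-variable
    (∀ (g g' : G) (x : Hhat), b g g' x ∈ π.ker) ∧
    (∀ (g g' : G) (x x' : Hhat), π x = π x' → b g g' x = b g g' x') ∧
    (∀ (g g' : G) (x x' : Hhat), b g g' (x * x') = b g g' x * b g g' x') ∧
    -- (b) invariance under translating the arguments by elements of H
    (∀ (g g' : G) (y : Hhat) (x : Hhat),
      b ((↑(π y) : G) * g) g' x = b g g' x ∧ b g (g' * (↑(π y) : G)) x = b g g' x) ∧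
    -- (c) the twisted 2-cocycle identity
    (∀ (g g' g'' : G) (x z : Hhat),
      (↑(π z) : G) = g'' * (↑(π x) : G) * g''⁻¹ →
        b g' g'' x * (b (g * g') g'' x)⁻¹ * b g (g' * g'') x * (b g g' z)⁻¹ = 1) :=
  gerbal_pair_lifting_obstruction_two_cocycle_general H π hcentral ρ hlift hfix hcomp b hb
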